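/- Let m ≥ 1 and let d be an integer with gcd(d, 2^m - 1) = 1. Then for all α, β ∈ F \ {0} with α ≠ β and all i, j ∈ GF(2): (-1)^(i+j) · Σ_{x ∈ F} (-1)^(tr((α+β)x + x^d)) = -2^m + 4·|D_d ∩ H^i(α)| + 4·|D_d ∩ H^j(β)| - 8·|D_d ∩ H^{i,j}(α,β)|. -/

import Mathlib

attribute [local instance] Classical.propDecidable

noncomputable instance (m : ℕ) : Fintype (GaloisField 2 m) := Fintype.ofFinite _

/-- The absolute trace map from `GF(2^m)` to `GF(2)`. -/
noncomputable def tr (m : ℕ) (x : GaloisField 2 m) : ZMod 2 :=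
  Algebra.trace (ZMod 2) (GaloisField 2 m) x

/-- `(-1)^t` as an integer, for `t ∈ GF(2)`. -/
def chi (t : ZMod 2) : ℤ := (-1) ^ t.val

/-- The Walsh coefficient `∑_{x ∈ F} (-1)^(tr(γx + βx^d))` of the power map `x ↦ x^d`. -/
noncomputable def walsh (m d : ℕ) (β γ : GaloisField 2 m) : ℤ :=
  ∑ x : GaloisField 2 m, chi (tr m (γ * x + β * x ^ d))

/-- The power function `x ↦ x^d` on `GF(2^m)` is maximum nonlinear (almost bent). -/
def MaxNonlinear (m d : ℕ) : Prop :=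
  ∀ β : GaloisField 2 m, β ≠ 0 → ∀ γ : GaloisField 2 m,
    walsh m d β γ ∈ ({0, 2 ^ ((m + 1) / 2), -(2 ^ ((m + 1) / 2))} : Set ℤ)

/-- `D_d = {x ∈ F : tr(x^d) = 1}`. -/
noncomputable def Dd (m d : ℕ) : Finset (GaloisField 2 m) :=
  Finset.univ.filter (fun x => tr m (x ^ d) = 1)

/-- `H^i(α) = {x ∈ F : tr(αx) = i}`. -/
noncomputable def Hi (m : ℕ) (α : GaloisField 2 m) (i : ZMod 2) :
    Finset (GaloisField 2 m) :=
  Finset.univ.filter (fun x => tr m (α * x) = i)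

/-- `H^{i,j}(α,β) = {x ∈ F : tr(αx) = i and tr(βx) = j}`. -/
noncomputable def Hij (m : ℕ) (α β : GaloisField 2 m) (i j : ZMod 2) :
    Finset (GaloisField 2 m) :=
  Finset.univ.filter (fun x => tr m (α * x) = i ∧ tr m (β * x) = j)

/-!
Put `a = tr(αx)`, `b = tr(βx)`, `t = tr(x^d)`. Checking the eight values of `(a, b, t)` gives
`(-1)^(i+j) (-1)^(a+b+t) = (-1)^(i+j) (-1)^(a+b) + (-1)^t - 1 + 4[t = 1, a = i] + 4[t = 1, b = j]
 - 8[t = 1, a = i, b = j]`, and summing over `x` turns the brackets into the three cardinalities.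
Both remaining character sums vanish: `x ↦ (α + β)x` and `x ↦ x^d` permute `F` (the latter since
`gcd(d, 2^m - 1) = 1`, and `d ≠ 0` because `F` holds the three elements `0, α, β`), so each equals
`∑_y (-1)^tr(y) = 0`, the trace being a nonzero linear form.
-/

open Finset

lemma chi_add_one (s : ZMod 2) : chi (s + 1) = -chi s := by
  fin_cases s <;> decide

lemma chi_mul_chi_add_add (a b t i j : ZMod 2) :
    chi (i + j) * chi (a + b + t) =
      chi (i + j) * chi (a + b) + chi t - 1
        + 4 * (if t = 1 ∧ a = i then 1 else 0)
        + 4 * (if t = 1 ∧ b = j then 1 else 0)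
        - 8 * (if t = 1 ∧ a = i ∧ b = j then 1 else 0) := by
  revert a b t i j
  decide

lemma sum_chi_eq_zero_of_apply_eq_one {G : Type*} [AddGroup G] [Fintype G] (f : G →+ ZMod 2)
    {z : G} (hz : f z = 1) : ∑ x, chi (f x) = 0 := by
  have hshift : ∑ x, chi (f (x + z)) = ∑ x, chi (f x) :=
    Equiv.sum_comp (Equiv.addRight z) (fun x => chi (f x))
  simp only [map_add, hz, chi_add_one, sum_neg_distrib] at hshift
  linarith

lemma tr_add (m : ℕ) (x y : GaloisField 2 m) : tr m (x + y) = tr m x + tr m y :=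
  map_add _ x y

lemma sum_chi_tr_eq_zero (m : ℕ) : ∑ x : GaloisField 2 m, chi (tr m x) = 0 := by
  obtain ⟨z, hz⟩ := Algebra.trace_surjective (ZMod 2) (GaloisField 2 m) 1
  exact sum_chi_eq_zero_of_apply_eq_one
    (Algebra.trace (ZMod 2) (GaloisField 2 m)).toAddMonoidHom hz

lemma sum_chi_tr_comp_eq_zero (m : ℕ) {g : GaloisField 2 m → GaloisField 2 m}
    (hg : Function.Bijective g) : ∑ x, chi (tr m (g x)) = 0 := by
  rw [Function.Bijective.sum_comp hg (fun y => chi (tr m y)), sum_chi_tr_eq_zero]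

lemma pow_bijective_of_coprime {K : Type*} [Field K] [Fintype K] {d : ℕ} (hd : d ≠ 0)
    (hcop : Nat.Coprime d (Fintype.card K - 1)) : Function.Bijective (fun x : K => x ^ d) := by
  have hunits : (Nat.card Kˣ).Coprime d := by
    rwa [Nat.card_eq_fintype_card, Fintype.card_units, Nat.coprime_comm]
  refine Finite.injective_iff_bijective.mp fun x y (hxy : x ^ d = y ^ d) => ?_
  rcases eq_or_ne x 0 with rfl | hx
  · exact ((pow_eq_zero_iff hd).mp (hxy.symm.trans (zero_pow hd))).symm
  rcases eq_or_ne y 0 with rfl | hy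
  · exact (pow_eq_zero_iff hd).mp (hxy.trans (zero_pow hd))
  have := hunits.pow_left_bijective.injective
    (a₁ := Units.mk0 x hx) (a₂ := Units.mk0 y hy) (Units.ext (by simpa using hxy))
  simpa using congrArg Units.val this

lemma card_filter_and_eq_sum {ι : Type*} [Fintype ι] (p q : ι → Prop) [DecidablePred p]
    [DecidablePred q] :
    ((univ.filter p ∩ univ.filter q).card : ℤ) = ∑ x, if p x ∧ q x then 1 else 0 := by
  rw [← filter_and, natCast_card_filter]

lemma chi_mul_sum_chi_add_add {ι : Type*} [Fintype ι] (a b t : ι → ZMod 2) (i j : ZMod 2) :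
    chi (i + j) * ∑ x, chi (a x + b x + t x) =
      chi (i + j) * ∑ x, chi (a x + b x) + ∑ x, chi (t x) - Fintype.card ι
        + 4 * ((univ.filter (t · = 1) ∩ univ.filter (a · = i)).card : ℤ)
        + 4 * ((univ.filter (t · = 1) ∩ univ.filter (b · = j)).card : ℤ)
        - 8 * ((univ.filter (t · = 1) ∩
            univ.filter (fun x => a x = i ∧ b x = j)).card : ℤ) := by
  simp only [card_filter_and_eq_sum, mul_sum, chi_mul_chi_add_add, sum_add_distrib,
    sum_sub_distrib, sum_const, card_univ, nsmul_eq_mul, mul_one]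

/-- For `gcd(d, 2^m - 1) = 1`, distinct nonzero `α, β` and `i, j ∈ GF(2)`:
`(-1)^(i+j) · ∑_x (-1)^(tr((α+β)x + x^d)) = -2^m + 4|D_d ∩ H^i(α)| + 4|D_d ∩ H^j(β)|
 - 8|D_d ∩ H^{i,j}(α,β)|`. -/
theorem stmt8 (m : ℕ) (hm : 1 ≤ m) (d : ℕ) (hgcd : Nat.gcd d (2 ^ m - 1) = 1) :
    ∀ α β : GaloisField 2 m, α ≠ 0 → β ≠ 0 → α ≠ β → ∀ i j : ZMod 2,
      chi (i + j) * (∑ x : GaloisField 2 m, chi (tr m ((α + β) * x + x ^ d))) =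
        -(2 ^ m) + 4 * ((Dd m d ∩ Hi m α i).card : ℤ)
          + 4 * ((Dd m d ∩ Hi m β j).card : ℤ)
          - 8 * ((Dd m d ∩ Hij m α β i j).card : ℤ) := by
  intro α β hα hβ hαβ i j
  have hcard : Fintype.card (GaloisField 2 m) = 2 ^ m := by
    rw [← Nat.card_eq_fintype_card, GaloisField.card 2 m (by omega)]
  have hd : d ≠ 0 := by
    have : 2 < 2 ^ m := hcard ▸ Fintype.two_lt_card_iff.mpr ⟨0, α, β, hα.symm, hβ.symm, hαβ⟩
    rintro rfl
    rw [Nat.gcd_zero_left] at hgcd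
    omega
  have hαβ0 : α + β ≠ 0 := fun h => hαβ (CharTwo.add_eq_zero.mp h)
  have hlin := sum_chi_tr_comp_eq_zero m (mulLeft_bijective₀ (α + β) hαβ0)
  have hpow := sum_chi_tr_comp_eq_zero m (pow_bijective_of_coprime hd (hcard ▸ hgcd))
  have key := chi_mul_sum_chi_add_add (tr m <| α * ·) (tr m <| β * ·) (tr m <| · ^ d) i j
  simp only [← tr_add, ← add_mul] at key
  rw [key, hlin, hpow, hcard, Dd, Hi, Hi, Hij]
  push_cast
  ring
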